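/- arXiv:2004.01861 — 4 statements merged into one kernel-verified Lean document; each statement's English description precedes it below -/
import Mathlib

section
/- Let f : ℝⁿ → ℝᵐ, let f_d : ℝⁿ × ℝⁿ → ℝᵐ be a decomposition function for f (monotonically increasing in its first argument, monotonically decreasing in its second argument, and f_d(x,x) = f(x) for all x), let x̲ ≤ x̄ in ℝⁿ, and let Ā, A̲ be real m×n matrices and ē, e̲ ∈ ℝᵐ be such that A̲x + e̲ ≤ f(x) ≤ Āx + ē componentwise for all x in the box [x̲, x̄]. Define q̲ = max( f_d(x̲, x̄), A̲⁺x̲ − A̲⁻x̄ + e̲ ) and q̄ = min( f_d(x̄, x̲), Ā⁺x̄ − Ā⁻x̲ + ē ), where max and min are taken componentwise. Then q̲ ≤ f(x) ≤ q̄ componentwise for every x ∈ [x̲, x̄]. -/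
open Matrix

/-- Entrywise positive part of a matrix: `(A⁺)ᵢⱼ = max (Aᵢⱼ) 0`. -/
def matPos {m n : Type*} (A : Matrix m n ℝ) : Matrix m n ℝ :=
  Matrix.of fun i j => max (A i j) 0

/-- Entrywise negative part of a matrix: `A⁻ = A⁺ - A`. -/
def matNeg {m n : Type*} (A : Matrix m n ℝ) : Matrix m n ℝ := matPos A - A

lemma mulVec_mono_of_nonneg {m n : ℕ} (A : Matrix (Fin m) (Fin n) ℝ)
    (hA : ∀ i j, 0 ≤ A i j) {u v : Fin n → ℝ} (huv : u ≤ v) :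
    A.mulVec u ≤ A.mulVec v := by
  intro i
  simp only [Matrix.mulVec, dotProduct]
  exact Finset.sum_le_sum fun j _ => mul_le_mul_of_nonneg_left (huv j) (hA i j)

lemma mulVec_split {m n : ℕ} (A : Matrix (Fin m) (Fin n) ℝ) (x : Fin n → ℝ) :
    A.mulVec x = (matPos A).mulVec x - (matNeg A).mulVec x := by
  have : matPos A - matNeg A = A := by
    simp [matNeg]
  conv_lhs => rw [← this]
  rw [Matrix.sub_mulVec]

/-- Combining a decomposition function with an affine abstraction of f on
the box [x̲, x̄] yields the bounds q̲ = max(f_d(x̲,x̄), A̲⁺x̲ − A̲⁻x̄ + e̲) and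
q̄ = min(f_d(x̄,x̲), Ā⁺x̄ − Ā⁻x̲ + ē), so that q̲ ≤ f(x) ≤ q̄ for every x ∈ [x̲, x̄]. -/
theorem decomposition_and_abstraction_bounding {n m : ℕ}
    (f : (Fin n → ℝ) → (Fin m → ℝ)) (fd : (Fin n → ℝ) → (Fin n → ℝ) → (Fin m → ℝ))
    (hmono : ∀ y, Monotone fun x => fd x y)
    (hanti : ∀ x, Antitone fun y => fd x y)
    (hdiag : ∀ x, fd x x = f x)
    (xl xu : Fin n → ℝ) (hbox : xl ≤ xu)
    (Au Al : Matrix (Fin m) (Fin n) ℝ) (eu el : Fin m → ℝ)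
    (habs : ∀ x : Fin n → ℝ, xl ≤ x → x ≤ xu →
      Al.mulVec x + el ≤ f x ∧ f x ≤ Au.mulVec x + eu) :
    ∀ x : Fin n → ℝ, xl ≤ x → x ≤ xu →
      (fd xl xu ⊔ ((matPos Al).mulVec xl - (matNeg Al).mulVec xu + el)) ≤ f x ∧
      f x ≤ (fd xu xl ⊓ ((matPos Au).mulVec xu - (matNeg Au).mulVec xl + eu)) := by
  intro x hl hu
  have hPos : ∀ (A : Matrix (Fin m) (Fin n) ℝ) i j, (0:ℝ) ≤ matPos A i j :=
    fun A i j => le_max_right _ _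
  have hNeg : ∀ (A : Matrix (Fin m) (Fin n) ℝ) i j, (0:ℝ) ≤ matNeg A i j := by
    intro A i j
    simp [matNeg, matPos]
  have hfd1 : fd xl xu ≤ f x := by
    calc fd xl xu ≤ fd x xu := hmono xu hl
    _ ≤ fd x x := hanti x hu
    _ = f x := by rw [hdiag]
  have hfd2 : f x ≤ fd xu xl := by
    calc f x = fd x x := (hdiag x).symm
    _ ≤ fd x xl := hanti x hl
    _ ≤ fd xu xl := hmono xl hu
  obtain ⟨hlo, hhi⟩ := habs x hl hu
  have hAl : (matPos Al).mulVec xl - (matNeg Al).mulVec xu + el ≤ f x := by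
    refine le_trans ?_ hlo
    rw [mulVec_split Al x]
    have h1 := mulVec_mono_of_nonneg (matPos Al) (hPos Al) hl
    have h2 := mulVec_mono_of_nonneg (matNeg Al) (hNeg Al) hu
    intro i
    simp only [Pi.add_apply, Pi.sub_apply]
    linarith [h1 i, h2 i]
  have hAu : f x ≤ (matPos Au).mulVec xu - (matNeg Au).mulVec xl + eu := by
    refine le_trans hhi ?_
    rw [mulVec_split Au x]
    have h1 := mulVec_mono_of_nonneg (matPos Au) (hPos Au) hu
    have h2 := mulVec_mono_of_nonneg (matNeg Au) (hNeg Au) hl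
    intro i
    simp only [Pi.add_apply, Pi.sub_apply]
    linarith [h1 i, h2 i]
  exact ⟨sup_le hfd1 hAl, le_inf hfd2 hAu⟩
end

section
/- Let q : ℝⁿ → ℝᵐ be L-Lipschitz continuous with respect to the Euclidean norms (‖q(x₁) − q(x₂)‖ ≤ L‖x₁ − x₂‖ for all x₁, x₂), let C be a real m×n matrix, and let z : ℝⁿ × ℝⁿ → ℝⁿ be a map such that for every x, y ∈ ℝⁿ and every coordinate j, the j-th component z(x, y)_j equals either x_j or y_j. Define q_d(x, y) = q(z(x, y)) + C(x − y). Then for all x̲ ≤ x̄ in ℝⁿ, ‖q_d(x̄, x̲) − q_d(x̲, x̄)‖ ≤ (L + 2‖C‖) ‖x̄ − x̲‖, where ‖C‖ denotes the operator norm of C induced by the Euclidean norms. Moreover, if q̲, q̄ ∈ ℝᵐ satisfy q_d(x̲, x̄) ≤ q̲ ≤ q̄ ≤ q_d(x̄, x̲) componentwise, then ‖q̄ − q̲‖ ≤ ‖q_d(x̄, x̲) − q_d(x̲, x̄)‖ ≤ (L + 2‖C‖)‖x̄ − x̲‖. -/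
open Matrix

/-- Euclidean norm of a vector. -/
noncomputable def eucNorm {n : Type*} [Fintype n] (x : n → ℝ) : ℝ :=
  Real.sqrt (∑ i, x i ^ 2)

/-- Operator norm of a matrix induced by the Euclidean norms. -/
noncomputable def eucOpNorm {m n : Type*} [Fintype m] [Fintype n] [DecidableEq n]
    (A : Matrix m n ℝ) : ℝ :=
  ‖LinearMap.toContinuousLinearMap (Matrix.toEuclideanLin A)‖

/-!
The width `q_d(x̄, x̲) - q_d(x̲, x̄)` splits as `q(z(x̄, x̲)) - q(z(x̲, x̄)) + 2 C (x̄ - x̲)`.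
Coordinatewise, `z(x̄, x̲) - z(x̲, x̄)` is `0` or `±(x̄ - x̲)_j`, so its norm is at most
`‖x̄ - x̲‖` and the Lipschitz bound applies; the matrix part contributes `2 ‖C‖ ‖x̄ - x̲‖`.
For the sandwiched pair, `0 ≤ q̄ - q̲ ≤ q_d(x̄, x̲) - q_d(x̲, x̄)` componentwise, and the
Euclidean norm is monotone in the absolute values of the coordinates.
-/

section EucNorm

variable {ι κ : Type*} [Fintype ι]

lemma eucNorm_eq_norm_toLp (x : ι → ℝ) : eucNorm x = ‖WithLp.toLp 2 x‖ := by
  simp [eucNorm, EuclideanSpace.norm_eq, sq_abs]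

lemma eucNorm_nonneg (x : ι → ℝ) : 0 ≤ eucNorm x := Real.sqrt_nonneg _

lemma eucNorm_add_le (x y : ι → ℝ) : eucNorm (x + y) ≤ eucNorm x + eucNorm y := by
  simpa only [eucNorm_eq_norm_toLp, WithLp.toLp_add] using norm_add_le _ _

lemma eucNorm_smul (c : ℝ) (x : ι → ℝ) : eucNorm (c • x) = |c| * eucNorm x := by
  simp only [eucNorm_eq_norm_toLp, WithLp.toLp_smul, norm_smul, Real.norm_eq_abs]

lemma eucNorm_le_of_abs_le {x y : ι → ℝ} (h : ∀ i, |x i| ≤ |y i|) : eucNorm x ≤ eucNorm y :=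
  Real.sqrt_le_sqrt <| Finset.sum_le_sum fun i _ => sq_le_sq.mpr (h i)

lemma eucNorm_mulVec_le [Fintype κ] [DecidableEq κ] (A : Matrix ι κ ℝ) (v : κ → ℝ) :
    eucNorm (A *ᵥ v) ≤ eucOpNorm A * eucNorm v := by
  simpa only [eucNorm_eq_norm_toLp, eucOpNorm, LinearMap.coe_toContinuousLinearMap',
    Matrix.toLpLin_apply] using
    (LinearMap.toContinuousLinearMap (Matrix.toEuclideanLin A)).le_opNorm (WithLp.toLp 2 v)

lemma eucNorm_sub_le_of_le_of_le {a u v b : ι → ℝ} (hau : a ≤ u) (huv : u ≤ v) (hvb : v ≤ b) :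
    eucNorm (v - u) ≤ eucNorm (b - a) :=
  eucNorm_le_of_abs_le fun i => by
    simp only [Pi.sub_apply]
    rw [abs_of_nonneg (sub_nonneg.mpr (huv i)),
      abs_of_nonneg (sub_nonneg.mpr ((hau i).trans ((huv i).trans (hvb i))))]
    linarith [hau i, hvb i]

end EucNorm

lemma abs_sub_le_of_mem_pair {a b u v : ℝ} (hu : u = a ∨ u = b) (hv : v = a ∨ v = b) :
    |u - v| ≤ |a - b| := by
  rcases hu with rfl | rfl <;> rcases hv with rfl | rfl <;> simp [abs_sub_comm]

section Decomposition

variable {ι κ : Type*} [Fintype ι] [Fintype κ]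

lemma eucNorm_sub_swap_le {z : (ι → ℝ) → (ι → ℝ) → (ι → ℝ)}
    (hz : ∀ x y j, z x y j = x j ∨ z x y j = y j) (x y : ι → ℝ) :
    eucNorm (z x y - z y x) ≤ eucNorm (x - y) :=
  eucNorm_le_of_abs_le fun j => abs_sub_le_of_mem_pair (hz x y j) ((hz y x j).symm)

lemma eucNorm_sub_le_of_lipschitz_bound {L : ℝ} {q : (ι → ℝ) → (κ → ℝ)}
    (hLip : ∀ x₁ x₂, eucNorm (q x₁ - q x₂) ≤ L * eucNorm (x₁ - x₂))
    {a b x y : ι → ℝ} (h : eucNorm (a - b) ≤ eucNorm (x - y)) :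
    eucNorm (q a - q b) ≤ L * eucNorm (x - y) := by
  rcases le_or_gt 0 L with hL | hL
  · exact (hLip a b).trans (mul_le_mul_of_nonneg_left h hL)
  · -- a negative `L` forces every distance, hence every bound, to vanish
    nlinarith [hLip a b, hLip x y, eucNorm_nonneg (a - b), eucNorm_nonneg (q x - q y)]

variable [DecidableEq ι]

lemma eucNorm_decomposition_sub_le {L : ℝ} {q : (ι → ℝ) → (κ → ℝ)}
    (hLip : ∀ x₁ x₂, eucNorm (q x₁ - q x₂) ≤ L * eucNorm (x₁ - x₂)) (C : Matrix κ ι ℝ)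
    {z : (ι → ℝ) → (ι → ℝ) → (ι → ℝ)} (hz : ∀ x y j, z x y j = x j ∨ z x y j = y j)
    (x y : ι → ℝ) :
    eucNorm (q (z x y) + C *ᵥ (x - y) - (q (z y x) + C *ᵥ (y - x))) ≤
      (L + 2 * eucOpNorm C) * eucNorm (x - y) := by
  have hsplit : q (z x y) + C *ᵥ (x - y) - (q (z y x) + C *ᵥ (y - x)) =
      (q (z x y) - q (z y x)) + C *ᵥ ((2 : ℝ) • (x - y)) := by
    simp only [mulVec_sub, mulVec_smul]
    module
  calc _ ≤ eucNorm (q (z x y) - q (z y x)) + eucNorm (C *ᵥ ((2 : ℝ) • (x - y))) :=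
        hsplit ▸ eucNorm_add_le _ _
    _ ≤ L * eucNorm (x - y) + eucOpNorm C * eucNorm ((2 : ℝ) • (x - y)) :=
        add_le_add (eucNorm_sub_le_of_lipschitz_bound hLip (eucNorm_sub_swap_le hz x y))
          (eucNorm_mulVec_le C _)
    _ = (L + 2 * eucOpNorm C) * eucNorm (x - y) := by
        rw [eucNorm_smul, abs_two]
        ring

end Decomposition

/-- For q L-Lipschitz (Euclidean norms) and the decomposition function
q_d(x,y) = q(z(x,y)) + C(x−y), where z selects each coordinate from x or y, one has
‖q_d(x̄,x̲) − q_d(x̲,x̄)‖ ≤ (L + 2‖C‖)‖x̄ − x̲‖, and any q̲ ≤ q̄ sandwiched between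
q_d(x̲,x̄) and q_d(x̄,x̲) satisfies ‖q̄ − q̲‖ ≤ ‖q_d(x̄,x̲) − q_d(x̲,x̄)‖ ≤ (L + 2‖C‖)‖x̄ − x̲‖. -/
theorem decomposition_lipschitz_like {n m : ℕ} (L : ℝ)
    (q : (Fin n → ℝ) → (Fin m → ℝ))
    (hLip : ∀ x₁ x₂ : Fin n → ℝ, eucNorm (q x₁ - q x₂) ≤ L * eucNorm (x₁ - x₂))
    (C : Matrix (Fin m) (Fin n) ℝ)
    (z : (Fin n → ℝ) → (Fin n → ℝ) → (Fin n → ℝ))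
    (hz : ∀ (x y : Fin n → ℝ) (j : Fin n), z x y j = x j ∨ z x y j = y j)
    (qd : (Fin n → ℝ) → (Fin n → ℝ) → (Fin m → ℝ))
    (hqd : ∀ x y : Fin n → ℝ, qd x y = q (z x y) + C.mulVec (x - y)) :
    ∀ xl xu : Fin n → ℝ, xl ≤ xu →
      (eucNorm (qd xu xl - qd xl xu) ≤ (L + 2 * eucOpNorm C) * eucNorm (xu - xl)) ∧
      (∀ ql qu : Fin m → ℝ, qd xl xu ≤ ql → ql ≤ qu → qu ≤ qd xu xl →
        eucNorm (qu - ql) ≤ eucNorm (qd xu xl - qd xl xu) ∧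
        eucNorm (qu - ql) ≤ (L + 2 * eucOpNorm C) * eucNorm (xu - xl)) := by
  intro xl xu _
  have hwidth : eucNorm (qd xu xl - qd xl xu) ≤ (L + 2 * eucOpNorm C) * eucNorm (xu - xl) := by
    simpa only [hqd] using eucNorm_decomposition_sub_le hLip C hz xu xl
  refine ⟨hwidth, fun ql qu hlow hmid hupp => ?_⟩
  have hsandwich := eucNorm_sub_le_of_le_of_le hlow hmid hupp
  exact ⟨hsandwich, hsandwich.trans hwidth⟩
end

section
/- Consider one step of the nonlinear system x⁺ = f + Bu + Gd + w, y = g + Du + Hd + v, where f, w, x⁺ ∈ ℝⁿ, g, v, y ∈ ℝˡ, u ∈ ℝᵐ, d ∈ ℝᵖ, and B, G, D, H are real matrices of compatible dimensions. Suppose f̲ ≤ f ≤ f̄, ḡ̲ ≤ g ≤ ḡ, w̲ ≤ w ≤ w̄, v̲ ≤ v ≤ v̄, and x̲⁺ ≤ x⁺ ≤ x̄⁺ componentwise. Let M be the (n+l)×p matrix obtained by stacking G on top of H, assume MᵀM is invertible, and let J = (MᵀM)⁻¹Mᵀ. Define the stacked vectors h̄ = ( x̄⁺ − f̲ − Bu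 − w̲ ; y − ḡ̲ − Du − v̲ ) and h̲ = ( x̲⁺ − f̄ − Bu − w̄ ; y − ḡ − Du − v̄ ) in ℝ^{n+l}. Then J⁺h̲ − J⁻h̄ ≤ d ≤ J⁺h̄ − J⁻h̲ componentwise. -/
open Matrix

/-- One step of x⁺ = f + Bu + Gd + w, y = g + Du + Hd + v with interval
bounds on f, g, w, v and x⁺; stacking M = (G; H) with MᵀM invertible, J = (MᵀM)⁻¹Mᵀ,
and h̄, h̲ as indicated, we get J⁺h̲ − J⁻h̄ ≤ d ≤ J⁺h̄ − J⁻h̲. -/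
theorem unknown_input_estimation {n l m p : ℕ}
    (f w xp fl fu wl wu xpl xpu : Fin n → ℝ)
    (g v y gl gu vl vu : Fin l → ℝ)
    (u : Fin m → ℝ) (d : Fin p → ℝ)
    (B : Matrix (Fin n) (Fin m) ℝ) (G : Matrix (Fin n) (Fin p) ℝ)
    (D : Matrix (Fin l) (Fin m) ℝ) (H : Matrix (Fin l) (Fin p) ℝ)
    (hx : xp = f + B.mulVec u + G.mulVec d + w)
    (hy : y = g + D.mulVec u + H.mulVec d + v)
    (hf1 : fl ≤ f) (hf2 : f ≤ fu) (hg1 : gl ≤ g) (hg2 : g ≤ gu)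
    (hw1 : wl ≤ w) (hw2 : w ≤ wu) (hv1 : vl ≤ v) (hv2 : v ≤ vu)
    (hxp1 : xpl ≤ xp) (hxp2 : xp ≤ xpu)
    (M : Matrix (Fin n ⊕ Fin l) (Fin p) ℝ) (hM : M = Matrix.fromRows G H)
    (hunit : IsUnit (Mᵀ * M))
    (J : Matrix (Fin p) (Fin n ⊕ Fin l) ℝ) (hJ : J = (Mᵀ * M)⁻¹ * Mᵀ)
    (hbar hund : Fin n ⊕ Fin l → ℝ)
    (hhbar : hbar = Sum.elim (xpu - fl - B.mulVec u - wl) (y - gl - D.mulVec u - vl))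
    (hhund : hund = Sum.elim (xpl - fu - B.mulVec u - wu) (y - gu - D.mulVec u - vu)) :
    (matPos J).mulVec hund - (matNeg J).mulVec hbar ≤ d ∧
    d ≤ (matPos J).mulVec hbar - (matNeg J).mulVec hund := by
  -- key: d = J.mulVec (M.mulVec d)
  have hJM : J * M = 1 := by
    rw [hJ, Matrix.mul_assoc, Matrix.nonsing_inv_mul _ ((Matrix.isUnit_iff_isUnit_det _).mp hunit)]
  have hd : J.mulVec (M.mulVec d) = d := by
    rw [Matrix.mulVec_mulVec, hJM, Matrix.one_mulVec]
  have hlow : hund ≤ M.mulVec d := by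
    intro i
    cases i with
    | inl i =>
      have hGd : G.mulVec d i = xp i - f i - B.mulVec u i - w i := by
        have := congrFun hx i; simp [Pi.add_apply] at this; linarith
      simp [hhund, hM, Matrix.fromRows_mulVec, hGd]
      have := hf2 i; have := hw2 i; have := hxp1 i
      simp [Pi.sub_apply]; linarith
    | inr i =>
      have hHd : H.mulVec d i = y i - g i - D.mulVec u i - v i := by
        have := congrFun hy i; simp [Pi.add_apply] at this; linarith
      simp [hhund, hM, Matrix.fromRows_mulVec, hHd]
      have := hg2 i; have := hv2 i
      simp [Pi.sub_apply]; linarith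
  have hhigh : M.mulVec d ≤ hbar := by
    intro i
    cases i with
    | inl i =>
      have hGd : G.mulVec d i = xp i - f i - B.mulVec u i - w i := by
        have := congrFun hx i; simp [Pi.add_apply] at this; linarith
      simp [hhbar, hM, Matrix.fromRows_mulVec, hGd]
      have := hf1 i; have := hw1 i; have := hxp2 i
      simp [Pi.sub_apply]; linarith
    | inr i =>
      have hHd : H.mulVec d i = y i - g i - D.mulVec u i - v i := by
        have := congrFun hy i; simp [Pi.add_apply] at this; linarith
      simp [hhbar, hM, Matrix.fromRows_mulVec, hHd]
      have := hg1 i; have := hv1 i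
      simp [Pi.sub_apply]; linarith
  set z := M.mulVec d with hz
  constructor
  · intro i
    rw [← hd]
    simp only [Pi.sub_apply, Matrix.mulVec, dotProduct, matPos, matNeg,
      Matrix.sub_apply, Matrix.of_apply, ← Finset.sum_sub_distrib]
    apply Finset.sum_le_sum
    intro j _
    have h1 := hlow j; have h2 := hhigh j
    have hp : 0 ≤ max (J i j) 0 := le_max_right _ _
    have hn : 0 ≤ max (J i j) 0 - J i j := by
      rcases le_or_gt (J i j) 0 with h | h
      · simp [max_eq_right h]; linarith
      · simp [max_eq_left h.le]
    nlinarith [mul_le_mul_of_nonneg_left h2 hp, mul_le_mul_of_nonneg_left h1 hn]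
  · intro i
    rw [← hd]
    simp only [Pi.sub_apply, Matrix.mulVec, dotProduct, matPos, matNeg,
      Matrix.sub_apply, Matrix.of_apply, ← Finset.sum_sub_distrib]
    apply Finset.sum_le_sum
    intro j _
    have h1 := hlow j; have h2 := hhigh j
    have hp : 0 ≤ max (J i j) 0 := le_max_right _ _
    have hn : 0 ≤ max (J i j) 0 - J i j := by
      rcases le_or_gt (J i j) 0 with h | h
      · simp [max_eq_right h]; linarith
      · simp [max_eq_left h.le]
    nlinarith [mul_le_mul_of_nonneg_left h1 hp, mul_le_mul_of_nonneg_left h2 hn]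
end

section
/- Let Σ be an invertible real r×r matrix and set Φ = Σ⁻¹. Suppose z = g + Du + v + Σd, where z, g, v ∈ ℝʳ, u ∈ ℝᵐ, d ∈ ℝʳ, and D is a real r×m matrix, and suppose ḡ̲ ≤ g ≤ ḡ and v̲ ≤ v ≤ v̄ componentwise. Then Φ(z − Du) + Φ⁻(ḡ̲ + v̲) − Φ⁺(ḡ + v̄) ≤ d ≤ Φ(z − Du) + Φ⁻(ḡ + v̄) − Φ⁺(ḡ̲ + v̲) componentwise. -/
open Matrix

/-- With Σ invertible, Φ = Σ⁻¹ and z = g + Du + v + Σd, interval bounds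
on g and v give Φ(z − Du) + Φ⁻(ḡ̲ + v̲) − Φ⁺(ḡ + v̄) ≤ d ≤ Φ(z − Du) + Φ⁻(ḡ + v̄) − Φ⁺(ḡ̲ + v̲). -/
theorem direct_feedthrough_input_bounding {r m : ℕ}
    (S : Matrix (Fin r) (Fin r) ℝ) (hS : IsUnit S)
    (Φ : Matrix (Fin r) (Fin r) ℝ) (hΦ : Φ = S⁻¹)
    (D : Matrix (Fin r) (Fin m) ℝ)
    (z g v gl gu vl vu : Fin r → ℝ) (u : Fin m → ℝ) (d : Fin r → ℝ)
    (hz : z = g + D.mulVec u + v + S.mulVec d)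
    (hg1 : gl ≤ g) (hg2 : g ≤ gu) (hv1 : vl ≤ v) (hv2 : v ≤ vu) :
    Φ.mulVec (z - D.mulVec u) + (matNeg Φ).mulVec (gl + vl)
        - (matPos Φ).mulVec (gu + vu) ≤ d ∧
    d ≤ Φ.mulVec (z - D.mulVec u) + (matNeg Φ).mulVec (gu + vu)
        - (matPos Φ).mulVec (gl + vl) := by
  have hdet : IsUnit S.det := (Matrix.isUnit_iff_isUnit_det S).mp hS
  have hkey : Φ.mulVec (z - D.mulVec u) = Φ.mulVec (g + v) + d := by
    have h1 : z - D.mulVec u = (g + v) + S.mulVec d := by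
      rw [hz]; abel
    rw [h1, Matrix.mulVec_add, Matrix.mulVec_mulVec, hΦ,
      Matrix.nonsing_inv_mul S hdet, Matrix.one_mulVec]
  have hterm : ∀ i j, matPos Φ i j * (gl j + vl j) - matNeg Φ i j * (gu j + vu j)
      ≤ Φ i j * (g j + v j) ∧
      Φ i j * (g j + v j) ≤ matPos Φ i j * (gu j + vu j) - matNeg Φ i j * (gl j + vl j) := by
    intro i j
    have hpos : 0 ≤ matPos Φ i j := le_max_right _ _
    have hneg : 0 ≤ matNeg Φ i j := by
      simp only [matNeg, matPos, Matrix.sub_apply, Matrix.of_apply]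
      have := le_max_left (Φ i j) 0
      linarith
    have hsplit : Φ i j = matPos Φ i j - matNeg Φ i j := by
      simp [matNeg]
    have hl : gl j + vl j ≤ g j + v j := add_le_add (hg1 j) (hv1 j)
    have hu : g j + v j ≤ gu j + vu j := add_le_add (hg2 j) (hv2 j)
    constructor
    · rw [hsplit]; nlinarith [mul_le_mul_of_nonneg_left hl hpos,
        mul_le_mul_of_nonneg_left hl hneg, mul_le_mul_of_nonneg_left hu hneg]
    · rw [hsplit]; nlinarith [mul_le_mul_of_nonneg_left hu hpos,
        mul_le_mul_of_nonneg_left hl hneg]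
  constructor <;> intro i <;>
    simp only [Pi.add_apply, Pi.sub_apply, hkey, Matrix.mulVec, dotProduct,
      Pi.add_apply] <;>
  · have hsum := Finset.sum_le_sum (fun j (_ : j ∈ Finset.univ) => (hterm i j).1)
    have hsum2 := Finset.sum_le_sum (fun j (_ : j ∈ Finset.univ) => (hterm i j).2)
    rw [Finset.sum_sub_distrib] at hsum hsum2
    linarith
end
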